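/- arXiv:0705.3058 — 2 statements merged into one kernel-verified Lean document; each statement's English description precedes it below -/
import Mathlib

section
/- For the retransmission policy, the service rate μ = pφσ(φ+σ−τ)/((φ+σ)(φ+σ−τ) − φσ) satisfies μ ≤ p·min(φ, σ). -/
/-! The denominator splits as `(φ + σ)(φ + σ - τ) - φσ = φ(φ - τ) + σ(φ + σ - τ)`, so it dominates
`σ(φ + σ - τ)` as soon as `τ ≤ φ`; this is exactly `μ ≤ pφ`. The bound `μ ≤ pσ` is the same
statement with the two destinations swapped. -/

noncomputable def retransmissionRate (p φ σ τ : ℝ) : ℝ :=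
  p * φ * σ * (φ + σ - τ) / ((φ + σ) * (φ + σ - τ) - φ * σ)

lemma retransmissionRate_comm (p φ σ τ : ℝ) :
    retransmissionRate p φ σ τ = retransmissionRate p σ φ τ := by
  unfold retransmissionRate
  ring_nf

lemma retransmissionRate_le_left {p φ σ τ : ℝ} (hp : 0 ≤ p) (hφ : 0 ≤ φ) (hσ : 0 ≤ σ)
    (hτφ : τ ≤ φ) : retransmissionRate p φ σ τ ≤ p * φ := by
  have hsplit : (φ + σ) * (φ + σ - τ) - φ * σ = φ * (φ - τ) + σ * (φ + σ - τ) := by ring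
  have hφτ : 0 ≤ φ * (φ - τ) := mul_nonneg hφ (sub_nonneg.2 hτφ)
  have hσφτ : 0 ≤ σ * (φ + σ - τ) := mul_nonneg hσ (by linarith)
  have hpφ : 0 ≤ p * φ := mul_nonneg hp hφ
  unfold retransmissionRate
  refine div_le_of_le_mul₀ (hsplit ▸ add_nonneg hφτ hσφτ) hpφ ?_
  calc p * φ * σ * (φ + σ - τ) = p * φ * (σ * (φ + σ - τ)) := by ring
    _ ≤ p * φ * (φ * (φ - τ) + σ * (φ + σ - τ)) := by gcongr; linarith
    _ = p * φ * ((φ + σ) * (φ + σ - τ) - φ * σ) := by rw [hsplit]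

theorem retransmission_rate_le_capacity_general (p φ σ τ : ℝ)
    (hp : 0 < p) (hφ0 : 0 < φ) (hσ0 : 0 < σ)
    (hτφ : τ ≤ φ) (hτσ : τ ≤ σ) :
    p * φ * σ * (φ + σ - τ) / ((φ + σ) * (φ + σ - τ) - φ * σ) ≤ p * min φ σ := by
  change retransmissionRate p φ σ τ ≤ _
  rw [mul_min_of_nonneg _ _ hp.le]
  refine le_min (retransmissionRate_le_left hp.le hφ0.le hσ0.le hτφ) ?_
  rw [retransmissionRate_comm]
  exact retransmissionRate_le_left hp.le hσ0.le hφ0.le hτσ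

/-- The retransmission service rate μ = pφσ(φ+σ−τ)/((φ+σ)(φ+σ−τ) − φσ) is at most
p·min(φ,σ), the Shannon capacity bound. -/
theorem retransmission_rate_le_capacity (p φ σ τ : ℝ)
    (hp : 0 < p) (hp' : p ≤ 1) (hφ0 : 0 < φ) (hφ : φ ≤ 1) (hσ0 : 0 < σ) (hσ : σ ≤ 1)
    (hτ : 0 < τ) (hτφ : τ ≤ φ) (hτσ : τ ≤ σ) :
    p * φ * σ * (φ + σ - τ) / ((φ + σ) * (φ + σ - τ) - φ * σ) ≤ p * min φ σ :=
  retransmission_rate_le_capacity_general p φ σ τ hp hφ0 hσ0 hτφ hτσ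
end

section
/- In the random access erasure channel model, the conditional mutual information satisfies I(X_1; Y_m | X_2) = h_b(p_1) + u·(p_1(1−p_2)q_{1|1}^{(m)} + p_1 p_2 q_{1|1,2}^{(m)}) bits, where X_1 takes the idle value 0 with probability 1−p_1 and is uniform on 2^u packet values otherwise, and Y_m reveals X_1 exactly with probability q_{1|1}^{(m)} when X_2 = 0 (resp. q_{1|1,2}^{(m)} when X_2 ≠ 0) and outputs an erasure symbol Δ otherwise. -/
noncomputable section

/-- Input alphabet: 0 is the idle symbol, 1,...,2^u are packet values. -/
abbrev InAlpha (u : ℕ) := Fin (2 ^ u + 1)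

/-- Output alphabet: `some x` means x is received, `none` is the erasure symbol Δ. -/
abbrev OutAlpha (u : ℕ) := Option (InAlpha u)

/-- Input distribution: idle with probability 1−p, uniform over the 2^u packets. -/
def inputPMF (u : ℕ) (p : ℝ) : InAlpha u → ℝ :=
  fun x => if x = 0 then 1 - p else p / 2 ^ u

/-- Erasure channel at destination m: when X1 = 0 the output is `some 0`; when X1 ≠ 0
the output is `some X1` with probability q11 (if X2 = 0) or q112 (if X2 ≠ 0),
and the erasure Δ otherwise. -/
def channelPMF (u : ℕ) (q11 q112 : ℝ) : InAlpha u → InAlpha u → OutAlpha u → ℝ :=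
  fun x1 x2 y =>
    if x1 = 0 then (if y = some 0 then 1 else 0)
    else
      let q := if x2 = 0 then q11 else q112
      if y = some x1 then q else if y = none then 1 - q else 0

/-- Joint distribution of (X1, X2, Y_m): X1, X2 independent inputs. -/
def jointPMF (u : ℕ) (p1 p2 q11 q112 : ℝ) : InAlpha u → InAlpha u → OutAlpha u → ℝ :=
  fun x1 x2 y => inputPMF u p1 x1 * inputPMF u p2 x2 * channelPMF u q11 q112 x1 x2 y

/-- Conditional mutual information I(X1; Y_m | X2) in bits, computed from the joint pmf
(with the convention 0·log(·) = 0, valid since Real.logb 2 0 = 0). -/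
def condMutInfo (u : ℕ) (p1 p2 q11 q112 : ℝ) : ℝ :=
  ∑ x1 : InAlpha u, ∑ x2 : InAlpha u, ∑ y : OutAlpha u,
    jointPMF u p1 p2 q11 q112 x1 x2 y *
      Real.logb 2
        (jointPMF u p1 p2 q11 q112 x1 x2 y *
            (∑ x1' : InAlpha u, ∑ y' : OutAlpha u, jointPMF u p1 p2 q11 q112 x1' x2 y') /
          ((∑ y' : OutAlpha u, jointPMF u p1 p2 q11 q112 x1 x2 y') *
            (∑ x1' : InAlpha u, jointPMF u p1 p2 q11 q112 x1' x2 y)))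

/-- Binary entropy function. -/
def binEnt (p : ℝ) : ℝ := -(p * Real.logb 2 p) - (1 - p) * Real.logb 2 (1 - p)

/-!
Because X₁ and X₂ are independent, I(X₁; Yₘ | X₂) is the P_{X₂}-average of the mutual
informations I(X₁; Yₘ | X₂ = x₂) of single-user erasure channels, whose success probability is
q₁|₁ or q₁|₁,₂ according as x₂ is idle or not. For the erasure channel with success probability q,
H(X₁) = h_b(p₁) + p₁u, while X₁ remains unknown exactly on an erasure, which happens with
probability p₁(1 - q) and leaves X₁ uniform over the 2^u packets: H(X₁ | Yₘ) = p₁(1 - q)u.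
-/

open Finset Real

section Information

variable {α β γ : Type*} [Fintype α] [Fintype β] [Fintype γ]

def mutualInfo (P : α → ℝ) (W : α → β → ℝ) : ℝ :=
  ∑ x, P x * ∑ y, W x y * logb 2 (W x y / ∑ x', P x' * W x' y)

def condMutualInfo (J : α → γ → β → ℝ) : ℝ :=
  ∑ x1, ∑ x2, ∑ y, J x1 x2 y *
    logb 2 (J x1 x2 y * (∑ x1', ∑ y', J x1' x2 y') /
      ((∑ y', J x1 x2 y') * ∑ x1', J x1' x2 y))

theorem condMutualInfo_indep {P1 : α → ℝ} {P2 : γ → ℝ} {W : γ → α → β → ℝ}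
    (hP1 : ∑ x, P1 x = 1) (hW : ∀ x2 x1, ∑ y, W x2 x1 y = 1) :
    condMutualInfo (fun x1 x2 y => P1 x1 * P2 x2 * W x2 x1 y) =
      ∑ x2, P2 x2 * mutualInfo P1 (W x2) := by
  unfold condMutualInfo mutualInfo
  rw [sum_comm]
  refine sum_congr rfl fun x2 _ => ?_
  have hrow : ∀ x1, ∑ y, P1 x1 * P2 x2 * W x2 x1 y = P1 x1 * P2 x2 := fun x1 => by
    rw [← mul_sum, hW, mul_one]
  have htot : ∑ x1, ∑ y, P1 x1 * P2 x2 * W x2 x1 y = P2 x2 := by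
    simp only [hrow, ← sum_mul, hP1, one_mul]
  have hcol : ∀ y, ∑ x1, P1 x1 * P2 x2 * W x2 x1 y = P2 x2 * ∑ x1, P1 x1 * W x2 x1 y :=
    fun y => by rw [mul_sum]; exact sum_congr rfl fun _ _ => by ring
  simp only [htot]
  simp only [hrow, hcol]
  rw [mul_sum]
  refine sum_congr rfl fun x1 _ => ?_
  rw [← mul_assoc, mul_sum]
  refine sum_congr rfl fun y _ => ?_
  by_cases h : P1 x1 * P2 x2 = 0
  · rcases mul_eq_zero.1 h with h | h <;> simp [h]
  have hc : P1 x1 * P2 x2 * P2 x2 ≠ 0 := mul_ne_zero h (right_ne_zero_of_mul h)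
  have harg : P1 x1 * P2 x2 * W x2 x1 y * P2 x2 /
      (P1 x1 * P2 x2 * (P2 x2 * ∑ x1', P1 x1' * W x2 x1' y)) =
        W x2 x1 y / ∑ x1', P1 x1' * W x2 x1' y := by
    rw [← mul_div_mul_left (W x2 x1 y) _ hc]
    ring
  rw [harg]
  ring

end Information

-- Valid for `c = 0` as well, since `x / 0 = 0` and `logb b 0 = 0`.
theorem mul_logb_div_mul_self (b c q : ℝ) : q * logb b (q / (c * q)) = -(q * logb b c) := by
  rcases eq_or_ne q 0 with rfl | hq
  · simp
  · rw [div_mul_cancel_right₀ hq, logb_inv, mul_neg]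

theorem mul_logb_div_two_pow (p : ℝ) (u : ℕ) : p * logb 2 (p / 2 ^ u) = p * (logb 2 p - u) := by
  rcases eq_or_ne p 0 with rfl | hp
  · simp
  · rw [logb_div hp (by positivity), logb_pow, logb_self_eq_one one_lt_two, mul_one]

section ErasureChannel

variable (u : ℕ) (p q : ℝ)

theorem sum_inputPMF_mul (f : InAlpha u → ℝ) :
    ∑ x, inputPMF u p x * f x = (1 - p) * f 0 + p / 2 ^ u * ∑ i : Fin (2 ^ u), f i.succ := by
  simp [Fin.sum_univ_succ, inputPMF, Fin.succ_ne_zero, mul_sum]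

theorem sum_inputPMF : ∑ x, inputPMF u p x = 1 := by
  simpa [field] using sum_inputPMF_mul u p 1

def erasurePMF : InAlpha u → OutAlpha u → ℝ :=
  fun x y => if x = 0 then (if y = some 0 then 1 else 0)
    else if y = some x then q else if y = none then 1 - q else 0

theorem sum_erasurePMF (x : InAlpha u) : ∑ y, erasurePMF u q x y = 1 := by
  by_cases hx : x = 0 <;> simp [Fintype.sum_option, erasurePMF, hx]

def erasureOutPMF : OutAlpha u → ℝ :=
  fun y => y.elim (p * (1 - q)) fun a => if a = 0 then 1 - p else p / 2 ^ u * q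

theorem sum_inputPMF_mul_erasurePMF (y : OutAlpha u) :
    ∑ x, inputPMF u p x * erasurePMF u q x y = erasureOutPMF u p q y := by
  rcases y with _ | a
  · rw [sum_inputPMF_mul]
    simp only [erasurePMF, ↓reduceIte, reduceCtorEq, Fin.succ_ne_zero, sum_const, card_univ,
      Fintype.card_fin, nsmul_eq_mul, Nat.cast_pow, Nat.cast_ofNat, mul_zero, zero_add,
      erasureOutPMF, Option.elim_none]
    field_simp
  · by_cases ha : a = 0
    · subst ha
      rw [sum_inputPMF_mul]
      simp [erasurePMF, erasureOutPMF, (Fin.succ_ne_zero _).symm]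
    · rw [sum_eq_single a]
      · simp [inputPMF, erasurePMF, erasureOutPMF, ha]
      · intro b _ hb
        simp [erasurePMF, ha, Ne.symm hb]
      · simp

theorem sum_erasurePMF_zero_mul_logb :
    ∑ y, erasurePMF u q 0 y *
      logb 2 (erasurePMF u q 0 y / ∑ x', inputPMF u p x' * erasurePMF u q x' y) =
      -logb 2 (1 - p) := by
  simp only [sum_inputPMF_mul_erasurePMF]
  simp [erasurePMF, erasureOutPMF, logb_inv]

theorem sum_erasurePMF_mul_logb {a : InAlpha u} (ha : a ≠ 0) :
    ∑ y, erasurePMF u q a y *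
      logb 2 (erasurePMF u q a y / ∑ x', inputPMF u p x' * erasurePMF u q x' y) =
      -(q * logb 2 (p / 2 ^ u)) - (1 - q) * logb 2 p := by
  simp only [sum_inputPMF_mul_erasurePMF]
  rw [Fintype.sum_option, sum_eq_single a]
  · simp only [erasurePMF, ha, ↓reduceIte, reduceCtorEq, erasureOutPMF, Option.elim_none,
      Option.elim_some, mul_logb_div_mul_self]
    ring
  · intro b _ hb
    simp [erasurePMF, ha, hb]
  · simp

theorem mutualInfo_erasurePMF :
    mutualInfo (inputPMF u p) (erasurePMF u q) = binEnt p + u * (p * q) := by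
  rw [mutualInfo, sum_inputPMF_mul, sum_erasurePMF_zero_mul_logb,
    sum_congr rfl fun i _ => sum_erasurePMF_mul_logb u p q (Fin.succ_ne_zero i)]
  have hpackets : p / 2 ^ u * ∑ _i : Fin (2 ^ u),
      (-(q * logb 2 (p / 2 ^ u)) - (1 - q) * logb 2 p) =
        -(q * (p * logb 2 (p / 2 ^ u))) - (1 - q) * (p * logb 2 p) := by
    simp only [sum_const, card_univ, Fintype.card_fin, nsmul_eq_mul]
    push_cast
    field_simp
  rw [hpackets, mul_logb_div_two_pow, binEnt]
  ring

end ErasureChannel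

theorem condMutInfo_eq_condMutualInfo (u : ℕ) (p1 p2 q11 q112 : ℝ) :
    condMutInfo u p1 p2 q11 q112 = condMutualInfo fun x1 x2 y =>
      inputPMF u p1 x1 * inputPMF u p2 x2 * erasurePMF u (if x2 = 0 then q11 else q112) x1 y :=
  rfl

theorem condMutInfo_random_access_general (u : ℕ) (p1 p2 q11 q112 : ℝ) :
    condMutInfo u p1 p2 q11 q112 =
      binEnt p1 + u * (p1 * (1 - p2) * q11 + p1 * p2 * q112) := by
  calc condMutInfo u p1 p2 q11 q112
      = ∑ x2, inputPMF u p2 x2 *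
          mutualInfo (inputPMF u p1) (erasurePMF u (if x2 = 0 then q11 else q112)) := by
        rw [condMutInfo_eq_condMutualInfo]
        exact condMutualInfo_indep (sum_inputPMF u p1) fun _ => sum_erasurePMF u _
    _ = ∑ x2, inputPMF u p2 x2 * (binEnt p1 + u * (p1 * if x2 = 0 then q11 else q112)) := by
        simp only [mutualInfo_erasurePMF]
    _ = binEnt p1 + u * (p1 * (1 - p2) * q11 + p1 * p2 * q112) := by
        rw [sum_inputPMF_mul]
        simp only [↓reduceIte, Fin.succ_ne_zero, sum_const, card_univ, Fintype.card_fin,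
          nsmul_eq_mul, Nat.cast_pow, Nat.cast_ofNat]
        field_simp
        ring

/-- I(X1; Y_m | X2) = h_b(p1) + u·(p1(1−p2)q_{1|1}^{(m)} + p1 p2 q_{1|1,2}^{(m)}). -/
theorem condMutInfo_random_access (u : ℕ) (hu : 1 ≤ u) (p1 p2 q11 q112 : ℝ)
    (hp1 : 0 ≤ p1) (hp1' : p1 ≤ 1) (hp2 : 0 ≤ p2) (hp2' : p2 ≤ 1)
    (hq11 : 0 ≤ q11) (hq11' : q11 ≤ 1) (hq112 : 0 ≤ q112) (hq112' : q112 ≤ 1) :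
    condMutInfo u p1 p2 q11 q112 =
      binEnt p1 + u * (p1 * (1 - p2) * q11 + p1 * p2 * q112) :=
  condMutInfo_random_access_general u p1 p2 q11 q112

end
end
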